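/- arXiv:2007.04713 — 3 statements merged into one kernel-verified Lean document; each statement's English description precedes it below -/
import Mathlib

section
/- Let Ω₁,...,Ω_M be positive definite d×d real matrices and let B be an invertible d×d real matrix such that B⁻¹ Ω_m (Bᵀ)⁻¹ is a diagonal matrix with strictly positive diagonal entries for every m. Then each column of B is an eigenvector of the matrix Ω_m Ω₁⁻¹ for every m = 2,...,M. -/
open Matrix

/-- If `B` is invertible and `B⁻¹ Ω_m (Bᵀ)⁻¹` is diagonal with strictly
positive diagonal entries for every `m`, then each column of `B` is an eigenvector of
`Ω_m Ω₁⁻¹` for every `m = 2,...,M` (indexed here by `m ≠ 0`, with `Ω 0` playing the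
role of `Ω₁`). -/
theorem stmt_0 {d M : ℕ} (Ω : Fin (M + 1) → Matrix (Fin d) (Fin d) ℝ)
    (hΩ : ∀ m, (Ω m).PosDef)
    (B : Matrix (Fin d) (Fin d) ℝ) (hB : IsUnit B)
    (hdiag : ∀ m, ∃ μ : Fin d → ℝ, (∀ i, 0 < μ i) ∧
      B⁻¹ * Ω m * (Bᵀ)⁻¹ = Matrix.diagonal μ) :
    ∀ m : Fin (M + 1), m ≠ 0 → ∀ i : Fin d, ∃ c : ℝ,
      (Ω m * (Ω 0)⁻¹).mulVec (fun k => B k i) = c • (fun k => B k i) := by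
  intro m _ i
  obtain ⟨μm, hμm, hm⟩ := hdiag m
  obtain ⟨μ0, hμ0, h0⟩ := hdiag 0
  have hBdet : IsUnit B.det := (Matrix.isUnit_iff_isUnit_det _).1 hB
  have hBTdet : IsUnit Bᵀ.det := by rwa [Matrix.det_transpose]
  have hB1 : B * B⁻¹ = 1 := Matrix.mul_nonsing_inv _ hBdet
  have hB1' : B⁻¹ * B = 1 := Matrix.nonsing_inv_mul _ hBdet
  have hBT1 : Bᵀ * (Bᵀ)⁻¹ = 1 := Matrix.mul_nonsing_inv _ hBTdet
  -- express Ω m and Ω 0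
  have key : ∀ (k : Fin (M + 1)) (μ : Fin d → ℝ),
      B⁻¹ * Ω k * (Bᵀ)⁻¹ = Matrix.diagonal μ → Ω k = B * Matrix.diagonal μ * Bᵀ := by
    intro k μ h
    rw [← h, Matrix.mul_assoc B⁻¹, Matrix.mul_nonsing_inv_cancel_left _ _ hBdet,
      Matrix.nonsing_inv_mul_cancel_right _ _ hBTdet]
  have hΩm : Ω m = B * Matrix.diagonal μm * Bᵀ := key m μm hm
  have hΩ0 : Ω 0 = B * Matrix.diagonal μ0 * Bᵀ := key 0 μ0 h0
  have hμ0i : ∀ j, μ0 j ≠ 0 := fun j => (hμ0 j).ne'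
  have hd : (Matrix.diagonal μ0)⁻¹ = Matrix.diagonal (fun j => (μ0 j)⁻¹) :=
    Matrix.inv_eq_right_inv (by
      have h1 : (fun j => μ0 j * (μ0 j)⁻¹) = fun _ => (1 : ℝ) :=
        funext fun j => mul_inv_cancel₀ (hμ0i j)
      rw [Matrix.diagonal_mul_diagonal, h1, Matrix.diagonal_one])
  have hinv : (Ω 0)⁻¹ = (Bᵀ)⁻¹ * Matrix.diagonal (fun j => (μ0 j)⁻¹) * B⁻¹ := by
    rw [hΩ0, Matrix.mul_inv_rev, Matrix.mul_inv_rev, hd, ← Matrix.mul_assoc]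
  have hprod : Ω m * (Ω 0)⁻¹ = B * Matrix.diagonal (fun j => μm j * (μ0 j)⁻¹) * B⁻¹ := by
    rw [hΩm, hinv]
    rw [Matrix.mul_assoc (B * Matrix.diagonal μm), mul_assoc ((Bᵀ)⁻¹),
      Matrix.mul_nonsing_inv_cancel_left _ _ hBTdet, ← Matrix.mul_assoc,
      Matrix.mul_assoc B, Matrix.diagonal_mul_diagonal]
  refine ⟨μm i * (μ0 i)⁻¹, ?_⟩
  have hcol : (fun k => B k i) = B.mulVec (Pi.single i 1) := by
    funext k
    simp [Matrix.mulVec_single]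
  have hBe : B⁻¹ *ᵥ B *ᵥ Pi.single i 1 = Pi.single i 1 := by
    rw [Matrix.mulVec_mulVec, hB1', Matrix.one_mulVec]
  rw [hprod, hcol, ← Matrix.mulVec_mulVec, ← Matrix.mulVec_mulVec, hBe]
  have : (Matrix.diagonal fun j => μm j * (μ0 j)⁻¹).mulVec (Pi.single i 1)
      = (μm i * (μ0 i)⁻¹) • (Pi.single i 1 : Fin d → ℝ) := by
    funext k
    rw [Matrix.mulVec_diagonal]
    by_cases hk : k = i
    · subst hk; simp
    · simp [Pi.single_eq_of_ne hk]
  rw [this, Matrix.mulVec_smul]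
end

section
/- Let Ω₁,...,Ω_M be positive definite d×d matrices satisfying Assumption 1: for every pair i ≠ j there exists m ∈ {2,...,M} with λ_{mi} ≠ λ_{mj}, where λ_{m1},...,λ_{md} are the eigenvalues of Ω_m Ω₁⁻¹. If B and B' = B A (A invertible) both simultaneously diagonalize all Ω_m with positive diagonal results, then A is the product of a permutation matrix and an invertible diagonal matrix; i.e., B is unique up to scalar multiples and ordering of its columns. -/
open Matrix

/-- Under Assumption 1 (for every pair `i ≠ j` there is `m` with
`λ_{mi} ≠ λ_{mj}`, where `λ_{mi}` are the eigenvalues of `Ω_m Ω₁⁻¹`, with the columns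
of `B` as corresponding eigenvectors), if `B` and `B * A` (with `A` invertible) both
simultaneously diagonalize all `Ω_m` with strictly positive diagonal results, then
`A` is the product of a permutation matrix and an invertible diagonal matrix. -/
theorem stmt_3 {d M : ℕ} (Ω : Fin (M + 1) → Matrix (Fin d) (Fin d) ℝ)
    (hΩ : ∀ m, (Ω m).PosDef)
    (B A : Matrix (Fin d) (Fin d) ℝ) (hB : IsUnit B) (hA : IsUnit A)
    (lam : Fin (M + 1) → Fin d → ℝ) (hpos : ∀ m i, 0 < lam m i)
    (heig : ∀ m, Ω m * (Ω 0)⁻¹ * B = B * Matrix.diagonal (lam m))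
    (hsep : ∀ i j : Fin d, i ≠ j → ∃ m : Fin (M + 1), m ≠ 0 ∧ lam m i ≠ lam m j)
    (hdiagB : ∀ m, ∃ μ : Fin d → ℝ, (∀ i, 0 < μ i) ∧
      B⁻¹ * Ω m * (Bᵀ)⁻¹ = Matrix.diagonal μ)
    (hdiagBA : ∀ m, ∃ μ : Fin d → ℝ, (∀ i, 0 < μ i) ∧
      (B * A)⁻¹ * Ω m * ((B * A)ᵀ)⁻¹ = Matrix.diagonal μ) :
    ∃ (σ : Equiv.Perm (Fin d)) (c : Fin d → ℝ), (∀ i, c i ≠ 0) ∧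
      A = σ.permMatrix ℝ * Matrix.diagonal c := by
  classical
  choose ν hνpos hνeq using hdiagBA
  set C : Matrix (Fin d) (Fin d) ℝ := B * A with hCdef
  have hC : IsUnit C := hB.mul hA
  have hBd : IsUnit B.det := (Matrix.isUnit_iff_isUnit_det B).mp hB
  have hAd : IsUnit A.det := (Matrix.isUnit_iff_isUnit_det A).mp hA
  have hCd : IsUnit C.det := (Matrix.isUnit_iff_isUnit_det C).mp hC
  have hCTd : IsUnit Cᵀ.det := by rwa [Matrix.det_transpose]
  have hΩ0d : IsUnit (Ω 0).det := (hΩ 0).det_pos.ne'.isUnit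
  -- Ω m = C * diagonal (ν m) * Cᵀ
  have hΩeq : ∀ m, Ω m = C * Matrix.diagonal (ν m) * Cᵀ := by
    intro m
    have h := hνeq m
    calc Ω m = (C * C⁻¹) * Ω m * ((Cᵀ)⁻¹ * Cᵀ) := by
          rw [Matrix.mul_nonsing_inv _ hCd, Matrix.nonsing_inv_mul _ hCTd, Matrix.one_mul,
            Matrix.mul_one]
      _ = C * (C⁻¹ * Ω m * (Cᵀ)⁻¹) * Cᵀ := by noncomm_ring
      _ = C * Matrix.diagonal (ν m) * Cᵀ := by rw [h]
  set f : Fin (M + 1) → Fin d → ℝ := fun m j => ν m j / ν 0 j with hf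
  have hXΩ : ∀ m, Ω m * (Ω 0)⁻¹ = C * Matrix.diagonal (f m) * C⁻¹ := by
    intro m
    have h1 : C * Matrix.diagonal (f m) * C⁻¹ * Ω 0 = Ω m := by
      rw [hΩeq 0, hΩeq m]
      calc C * Matrix.diagonal (f m) * C⁻¹ * (C * Matrix.diagonal (ν 0) * Cᵀ)
          = C * Matrix.diagonal (f m) * (C⁻¹ * C) * Matrix.diagonal (ν 0) * Cᵀ := by
            noncomm_ring
        _ = C * (Matrix.diagonal (f m) * Matrix.diagonal (ν 0)) * Cᵀ := by
            rw [Matrix.nonsing_inv_mul _ hCd, Matrix.mul_one]; noncomm_ring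
        _ = C * Matrix.diagonal (ν m) * Cᵀ := by
            have hd : (fun i => f m i * ν 0 i) = ν m :=
              funext fun j => div_mul_cancel₀ _ (hνpos 0 j).ne'
            rw [Matrix.diagonal_mul_diagonal, hd]
    calc Ω m * (Ω 0)⁻¹ = C * Matrix.diagonal (f m) * C⁻¹ * (Ω 0 * (Ω 0)⁻¹) := by
          rw [← h1]; noncomm_ring
      _ = C * Matrix.diagonal (f m) * C⁻¹ := by
          rw [Matrix.mul_nonsing_inv _ hΩ0d, Matrix.mul_one]
  -- key commutation relation
  have hkey : ∀ m, Matrix.diagonal (lam m) * A = A * Matrix.diagonal (f m) := by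
    intro m
    have h1 : C * Matrix.diagonal (f m) * C⁻¹ * B = B * Matrix.diagonal (lam m) := by
      rw [← hXΩ m]; exact heig m
    have h2 : B * (Matrix.diagonal (lam m) * A) = B * (A * Matrix.diagonal (f m)) := by
      calc B * (Matrix.diagonal (lam m) * A) = B * Matrix.diagonal (lam m) * A := by
            noncomm_ring
        _ = C * Matrix.diagonal (f m) * C⁻¹ * B * A := by rw [h1]
        _ = C * Matrix.diagonal (f m) * (C⁻¹ * C) := by rw [hCdef]; noncomm_ring
        _ = C * Matrix.diagonal (f m) := by rw [Matrix.nonsing_inv_mul _ hCd, Matrix.mul_one]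
        _ = B * (A * Matrix.diagonal (f m)) := by rw [hCdef]; noncomm_ring
    have h3 := congrArg (fun X => B⁻¹ * X) h2
    simpa [Matrix.mul_assoc, Matrix.nonsing_inv_mul _ hBd, ← Matrix.mul_assoc] using h3
  have hentry : ∀ m i j, lam m i * A i j = A i j * f m j := by
    intro m i j
    have := congrFun (congrFun (hkey m) i) j
    simpa [Matrix.diagonal_mul, Matrix.mul_diagonal] using this
  -- each column of A has a unique nonzero entry
  have hexu : ∀ j, ∃! i, A i j ≠ 0 := by
    intro j
    have hex : ∃ i, A i j ≠ 0 := by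
      by_contra h
      push_neg at h
      exact hAd.ne_zero (Matrix.det_eq_zero_of_column_eq_zero j h)
    obtain ⟨i, hi⟩ := hex
    refine ⟨i, hi, ?_⟩
    intro i' hi'
    by_contra hne
    obtain ⟨m, -, hm⟩ := hsep i' i hne
    have e1 : lam m i' = f m j := by
      have := hentry m i' j
      rw [mul_comm (A i' j)] at this
      rcases mul_eq_mul_right_iff.mp this with h | h
      · exact h
      · exact absurd h hi'
    have e2 : lam m i = f m j := by
      have := hentry m i j
      rw [mul_comm (A i j)] at this
      rcases mul_eq_mul_right_iff.mp this with h | h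
      · exact h
      · exact absurd h hi
    exact hm (e1.trans e2.symm)
  choose τ hτ huniq using hexu
  -- τ is injective
  have hτinj : Function.Injective τ := by
    intro j j' hjj'
    by_contra hne
    have hAinj : Function.Injective A.mulVec :=
      Matrix.mulVec_injective_iff_isUnit.mpr hA
    set i := τ j with hi
    set v : Fin d → ℝ := fun l => if l = j then A i j' else if l = j' then -(A i j) else 0
      with hv
    have hcol : ∀ k l, k ≠ τ l → A k l = 0 := by
      intro k l hk
      by_contra h
      exact hk (huniq l k h)
    have hAv : A.mulVec v = 0 := by
      funext k
      simp only [Matrix.mulVec, dotProduct, Pi.zero_apply]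
      rw [Finset.sum_eq_add_of_mem j j' (Finset.mem_univ _) (Finset.mem_univ _) hne ?_]
      · have hvj : v j = A i j' := by simp [hv]
        have hvj' : v j' = -(A i j) := by simp [hv, Ne.symm hne]
        rw [hvj, hvj']
        by_cases hk : k = i
        · subst hk; ring
        · have h1 : A k j = 0 := hcol k j (hi ▸ hk)
          have h2 : A k j' = 0 := hcol k j' (by rw [← hjj']; exact hi ▸ hk)
          rw [h1, h2]; ring
      · intro l hl hlne
        have : v l = 0 := by simp [hv, hlne.1, hlne.2]
        rw [this, mul_zero]
    have hv0 : v = 0 := hAinj (by rw [hAv, Matrix.mulVec_zero])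
    have : v j' = -(A i j) := by simp [hv, Ne.symm hne]
    rw [hv0] at this
    exact hτ j (by simpa using this.symm)
  have hτbij : Function.Bijective τ := Finite.injective_iff_bijective.mp hτinj
  let e : Equiv.Perm (Fin d) := Equiv.ofBijective τ hτbij
  refine ⟨e.symm, fun j => A (τ j) j, fun j => hτ j, ?_⟩
  ext i j
  have hperm : Equiv.Perm.permMatrix ℝ e.symm i j = if e.symm i = j then 1 else 0 := by
    simp only [Equiv.Perm.permMatrix, PEquiv.toMatrix_apply, Equiv.toPEquiv_apply,
      Option.mem_some_iff]
  rw [Matrix.mul_apply]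
  rw [Finset.sum_eq_single j]
  · rw [hperm, Matrix.diagonal_apply_eq]
    by_cases h : e.symm i = j
    · have : τ j = i := by
        have := congrArg e h
        simpa [e, Equiv.ofBijective_apply] using this.symm
      rw [if_pos h, this, one_mul]
    · have hne : i ≠ τ j := by
        intro hh
        apply h
        have : e j = i := by simpa [e, Equiv.ofBijective_apply] using hh.symm
        rw [← this, Equiv.symm_apply_apply]
      rw [if_neg h, zero_mul]
      by_contra hc
      exact hne (huniq j i hc)
  · intro b _ hb
    rw [Matrix.diagonal_apply_ne _ hb, mul_zero]
  · intro h
    exact absurd (Finset.mem_univ j) h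
end

section
/- Let W be an invertible d×d matrix with Ω₁ = W Wᵀ and Ω_m = W Λ_m Wᵀ for m = 2,...,M, where Λ_m are diagonal with positive entries. If D is another invertible matrix with Ω₁ = D Dᵀ and Ω_m = D Λ_m Dᵀ for all m, then Q := W⁻¹ D is an orthogonal matrix and Λ_m Q = Q Λ_m for all m = 2,...,M. -/
open Matrix

/-- If `Ω₁ = W Wᵀ`, `Ω_m = W Λ_m Wᵀ` and also `Ω₁ = D Dᵀ`,
`Ω_m = D Λ_m Dᵀ` with `W, D` invertible, then `Q := W⁻¹ D` is orthogonal and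
`Λ_m Q = Q Λ_m` for all `m`. -/
theorem stmt_6 {d M : ℕ} (W D : Matrix (Fin d) (Fin d) ℝ)
    (hW : IsUnit W) (hD : IsUnit D)
    (lam : Fin M → Fin d → ℝ) (hpos : ∀ m i, 0 < lam m i)
    (Ω₁ : Matrix (Fin d) (Fin d) ℝ) (Ω : Fin M → Matrix (Fin d) (Fin d) ℝ)
    (hW1 : Ω₁ = W * Wᵀ) (hWm : ∀ m, Ω m = W * Matrix.diagonal (lam m) * Wᵀ)
    (hD1 : Ω₁ = D * Dᵀ) (hDm : ∀ m, Ω m = D * Matrix.diagonal (lam m) * Dᵀ) :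
    (W⁻¹ * D) * (W⁻¹ * D)ᵀ = 1 ∧
      ∀ m, Matrix.diagonal (lam m) * (W⁻¹ * D) = (W⁻¹ * D) * Matrix.diagonal (lam m) := by
  have hWdet : IsUnit W.det := (Matrix.isUnit_iff_isUnit_det W).mp hW
  have hWinv : W⁻¹ * W = 1 := Matrix.nonsing_inv_mul W hWdet
  have hWinv' : W * W⁻¹ = 1 := Matrix.mul_nonsing_inv W hWdet
  have hWtdet : IsUnit Wᵀ.det := by rwa [Matrix.det_transpose]
  have hWt : Wᵀ * Wᵀ⁻¹ = 1 := Matrix.mul_nonsing_inv Wᵀ hWtdet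
  have htinv : (W⁻¹)ᵀ = Wᵀ⁻¹ := (Matrix.transpose_nonsing_inv W).symm ▸ rfl
  have hQQt : (W⁻¹ * D) * (W⁻¹ * D)ᵀ = 1 := by
    have hDDt : D * Dᵀ = W * Wᵀ := by rw [← hD1, hW1]
    calc (W⁻¹ * D) * (W⁻¹ * D)ᵀ
        = W⁻¹ * (D * Dᵀ) * Wᵀ⁻¹ := by
          rw [Matrix.transpose_mul, Matrix.transpose_nonsing_inv]; simp only [mul_assoc]
      _ = W⁻¹ * W * (Wᵀ * Wᵀ⁻¹) := by rw [hDDt]; simp only [mul_assoc]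
      _ = 1 := by rw [hWinv, hWt, mul_one]
  refine ⟨hQQt, fun m => ?_⟩
  -- Q Λ Qᵀ = Λ
  have key : (W⁻¹ * D) * Matrix.diagonal (lam m) * (W⁻¹ * D)ᵀ
      = Matrix.diagonal (lam m) := by
    have h : D * Matrix.diagonal (lam m) * Dᵀ = W * Matrix.diagonal (lam m) * Wᵀ := by
      rw [← hDm m, hWm m]
    calc (W⁻¹ * D) * Matrix.diagonal (lam m) * (W⁻¹ * D)ᵀ
        = W⁻¹ * (D * Matrix.diagonal (lam m) * Dᵀ) * Wᵀ⁻¹ := by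
          rw [Matrix.transpose_mul, Matrix.transpose_nonsing_inv]; simp only [mul_assoc]
      _ = W⁻¹ * W * Matrix.diagonal (lam m) * (Wᵀ * Wᵀ⁻¹) := by rw [h]; simp only [mul_assoc]
      _ = Matrix.diagonal (lam m) := by rw [hWinv, hWt, one_mul, mul_one]
  have hQtQ : (W⁻¹ * D)ᵀ * (W⁻¹ * D) = 1 := mul_eq_one_comm.mp hQQt
  calc Matrix.diagonal (lam m) * (W⁻¹ * D)
      = ((W⁻¹ * D) * Matrix.diagonal (lam m) * (W⁻¹ * D)ᵀ) * (W⁻¹ * D) := by rw [key]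
    _ = (W⁻¹ * D) * Matrix.diagonal (lam m) * ((W⁻¹ * D)ᵀ * (W⁻¹ * D)) := by simp only [mul_assoc]
    _ = (W⁻¹ * D) * Matrix.diagonal (lam m) := by rw [hQtQ, mul_one]
end
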